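/- Let H and B be m-th order n-dimensional real symmetric tensors with m even and B positive definite (B x^m > 0 for all x ≠ 0), let f(x) = H x^m / B x^m with gradient g, and let η ∈ (0, 2). Fix x ∈ ℝ^n with ‖x‖ = 1, set p = g(x), and define the curve x(α) = [ (1 − α²‖p‖²) x − 2α p ] / (1 + α²‖p‖²). Then there exists ᾱ > 0 such that for all α ∈ (0, ᾱ], f(x(α)) ≤ f(x) − η α ‖g(x)‖²; hence the curvilinear (backtracking) search is well defined. -/

import Mathlib

/-- `A x^m` for an `m`-th order `n`-dimensional tensor `A`. -/
noncomputable def tpow {m n : ℕ} (A : (Fin m → Fin n) → ℝ) (x : EuclideanSpace ℝ (Fin n)) : ℝ :=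
  ∑ g : Fin m → Fin n, A g * ∏ j, x (g j)

/-- A tensor is symmetric if its entries are invariant under index permutations. -/
def TensorSymmetric {m n : ℕ} (A : (Fin m → Fin n) → ℝ) : Prop :=
  ∀ (σ : Equiv.Perm (Fin m)) (g : Fin m → Fin n), A (g ∘ σ) = A g

/-!
Along the curve `x(α)` one has `x(0) = x` and `x'(0) = -2p`, so with `p = ∇f(x)` the chain rule
gives `(f ∘ x)'(0) = -2‖p‖²`. Since `η < 2`, this slope is strictly below `-η‖p‖²` when `p ≠ 0`,
so the difference quotients of `f ∘ x` stay below `-η‖p‖²` on some interval `(0, ᾱ]`. When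
`p = 0` the curve is constant.
-/

open Set Topology

@[fun_prop]
theorem differentiable_tpow {m n : ℕ} (A : (Fin m → Fin n) → ℝ) : Differentiable ℝ (tpow A) := by
  unfold tpow
  fun_prop

theorem HasDerivAt.exists_forall_Ioc_lt_of_lt {φ : ℝ → ℝ} {d s a : ℝ} (h : HasDerivAt φ d a)
    (hds : d < s) : ∃ u > a, ∀ t ∈ Ioc a u, φ t < φ a + s * (t - a) := by
  have hslope : ∀ᶠ t in 𝓝[>] a, slope φ a t < s :=
    h.hasDerivWithinAt.limsup_slope_le' (lt_irrefl a) hds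
  obtain ⟨u, hau, hsub⟩ := mem_nhdsGT_iff_exists_Ioc_subset.mp hslope
  refine ⟨u, hau, fun t ht => ?_⟩
  have hta : 0 < t - a := sub_pos.mpr ht.1
  have : slope φ a t < s := hsub ht
  rw [slope_def_field, div_lt_iff₀ hta] at this
  linarith

section CurvilinearPath

variable {E : Type*} [NormedAddCommGroup E]

/-- The curve `x(α)` of the curvilinear search from `x` along the direction `p`. -/
noncomputable def curvilinearPath [NormedSpace ℝ E] (x p : E) (α : ℝ) : E :=
  (1 / (1 + α ^ 2 * ‖p‖ ^ 2)) • ((1 - α ^ 2 * ‖p‖ ^ 2) • x - (2 * α) • p)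

@[simp]
theorem curvilinearPath_apply_zero [NormedSpace ℝ E] (x p : E) : curvilinearPath x p 0 = x := by
  simp [curvilinearPath]

@[simp]
theorem curvilinearPath_zero_right [NormedSpace ℝ E] (x : E) (α : ℝ) :
    curvilinearPath x 0 α = x := by
  simp [curvilinearPath]

theorem hasDerivAt_curvilinearPath_zero [NormedSpace ℝ E] (x p : E) :
    HasDerivAt (curvilinearPath x p) ((-2 : ℝ) • p) 0 := by
  set c := ‖p‖ ^ 2
  have hscale : HasDerivAt (fun α : ℝ => 1 / (1 + α ^ 2 * c)) 0 0 := by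
    have hden : HasDerivAt (fun α : ℝ => 1 + α ^ 2 * c) 0 0 := by
      simpa using ((hasDerivAt_pow 2 (0 : ℝ)).mul_const c).const_add 1
    simpa [one_div] using hden.fun_inv (by norm_num)
  have hx : HasDerivAt (fun α : ℝ => (1 - α ^ 2 * c) • x) 0 0 := by
    simpa using (((hasDerivAt_pow 2 (0 : ℝ)).mul_const c).const_sub 1).smul_const x
  have hp : HasDerivAt (fun α : ℝ => (2 * α) • p) ((2 : ℝ) • p) 0 := by
    simpa using ((hasDerivAt_id (0 : ℝ)).const_mul 2).smul_const p
  exact (hscale.fun_smul (hx.fun_sub hp)).congr_deriv (by simp)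

theorem HasGradientAt.exists_curvilinearPath_descent [InnerProductSpace ℝ E] [CompleteSpace E]
    {f : E → ℝ} {x p : E} (hf : HasGradientAt f p x) {η : ℝ} (hη : η < 2) :
    ∃ αbar > (0 : ℝ), ∀ α ∈ Ioc (0 : ℝ) αbar,
      f (curvilinearPath x p α) ≤ f x - η * α * ‖p‖ ^ 2 := by
  by_cases hp : p = 0
  · exact ⟨1, one_pos, fun α _ => by simp [hp]⟩
  have hslope : HasDerivAt (f ∘ curvilinearPath x p) (-2 * ‖p‖ ^ 2) 0 := by
    have hf' := hf.hasFDerivAt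
    rw [← curvilinearPath_apply_zero x p] at hf'
    refine (hf'.comp_hasDerivAt 0 (hasDerivAt_curvilinearPath_zero x p)).congr_deriv ?_
    simp [real_inner_smul_right]
  have hp2 : 0 < ‖p‖ ^ 2 := by positivity
  obtain ⟨u, hu, hdesc⟩ := hslope.exists_forall_Ioc_lt_of_lt
    (show -2 * ‖p‖ ^ 2 < -η * ‖p‖ ^ 2 by nlinarith)
  refine ⟨u, hu, fun α hα => ?_⟩
  have := hdesc α hα
  simp only [Function.comp_apply, curvilinearPath_apply_zero, sub_zero] at this
  linarith

end CurvilinearPath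

theorem curvilinear_search_well_defined_general
    {m n : ℕ}
    (H B : (Fin m → Fin n) → ℝ)
    (hBpd : ∀ z : EuclideanSpace ℝ (Fin n), z ≠ 0 → 0 < tpow B z)
    (η : ℝ) (hη2 : η < 2)
    (x : EuclideanSpace ℝ (Fin n)) (hx : ‖x‖ = 1)
    (p : EuclideanSpace ℝ (Fin n))
    (hp : p = gradient (fun y => tpow H y / tpow B y) x)
    (xc : ℝ → EuclideanSpace ℝ (Fin n))
    (hxc : ∀ α : ℝ, xc α = (1 / (1 + α ^ 2 * ‖p‖ ^ 2)) •
      ((1 - α ^ 2 * ‖p‖ ^ 2) • x - (2 * α) • p)) :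
    ∃ αbar > (0 : ℝ), ∀ α ∈ Set.Ioc (0 : ℝ) αbar,
      tpow H (xc α) / tpow B (xc α)
        ≤ tpow H x / tpow B x
          - η * α * ‖gradient (fun y => tpow H y / tpow B y) x‖ ^ 2 := by
  have hx0 : x ≠ 0 := by
    rintro rfl
    simp at hx
  have hf : DifferentiableAt ℝ (fun y => tpow H y / tpow B y) x := by
    fun_prop (disch := exact (hBpd x hx0).ne')
  obtain ⟨αbar, hαbar, hdesc⟩ := (hp ▸ hf.hasGradientAt).exists_curvilinearPath_descent hη2
  obtain rfl : xc = curvilinearPath x p := funext hxc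
  rw [← hp]
  exact ⟨αbar, hαbar, hdesc⟩

/-- for `m` even, `B` positive definite, `f(x) = H x^m / B x^m` with
gradient `g`, `η ∈ (0,2)`, a unit vector `x`, `p = g(x)`, and the curve
`x(α) = [(1 − α²‖p‖²) x − 2α p] / (1 + α²‖p‖²)`, there exists `ᾱ > 0` such that for
all `α ∈ (0, ᾱ]`, `f(x(α)) ≤ f(x) − η α ‖g(x)‖²`; hence the curvilinear
(backtracking) search is well defined. -/
theorem curvilinear_search_well_defined
    {m n : ℕ} (hm : Even m)
    (H B : (Fin m → Fin n) → ℝ)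
    (hH : TensorSymmetric H) (hB : TensorSymmetric B)
    (hBpd : ∀ z : EuclideanSpace ℝ (Fin n), z ≠ 0 → 0 < tpow B z)
    (η : ℝ) (hη : 0 < η) (hη2 : η < 2)
    (x : EuclideanSpace ℝ (Fin n)) (hx : ‖x‖ = 1)
    (p : EuclideanSpace ℝ (Fin n))
    (hp : p = gradient (fun y => tpow H y / tpow B y) x)
    (xc : ℝ → EuclideanSpace ℝ (Fin n))
    (hxc : ∀ α : ℝ, xc α = (1 / (1 + α ^ 2 * ‖p‖ ^ 2)) •
      ((1 - α ^ 2 * ‖p‖ ^ 2) • x - (2 * α) • p)) :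
    ∃ αbar > (0 : ℝ), ∀ α ∈ Set.Ioc (0 : ℝ) αbar,
      tpow H (xc α) / tpow B (xc α)
        ≤ tpow H x / tpow B x
          - η * α * ‖gradient (fun y => tpow H y / tpow B y) x‖ ^ 2 :=
  curvilinear_search_well_defined_general H B hBpd η hη2 x hx p hp xc hxc
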